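/- arXiv:math/0403523 — 2 statements merged into one kernel-verified Lean document; each statement's English description precedes it below -/
import Mathlib

section
/- Let ℓ ≥ 2 and τ : ℝ/ℤ → ℝ Lipschitz with ∫ τ = 0. Then the set J'_τ = { λ ∈ (0,1] : there exists a continuous μ with μ∘m_ℓ - λμ = τ } is a closed subset of (0,1]. -/
open MeasureTheory Set Metric Filter Topology

/-!
A continuous solution can be normalised to have mean zero, since `m_ℓ` preserves Haar measure and
`∫ τ = 0`. A maximum principle along the contracting inverse branches of `m_ℓ` makes it
`L`-Lipschitz, hence bounded by `L · diam`. The pairs `(λ, μ)` with `λ ∈ [0, 1]` and `μ` such a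
normalised solution form a compact subset of `ℝ × (ℝ/ℤ → ℝ)` in the product topology (Tychonoff;
the Lipschitz bound survives pointwise limits and keeps the limit continuous, which replaces
Arzelà–Ascoli), and `J'_τ` is the trace on `(0, 1]` of its projection to `ℝ`.
-/

section TwistedCohomologicalEquation

variable {X : Type*} [MetricSpace X] [CompactSpace X] {T : X → X} {τ μ : X → ℝ} {L : NNReal} {c : ℝ}

lemma dist_le_mul_of_comp_sub_mul_eq
    (hT : ∀ x y, ∃ x' y', T x' = x ∧ T y' = y ∧ 2 * dist x' y' ≤ dist x y)
    (hτ : LipschitzWith L τ) (hc : |c| ≤ 1) (hμ : Continuous μ)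
    (hsol : ∀ x, μ (T x) - c * μ x = τ x) {K : ℝ} (hK : L < K) (x y : X) :
    dist (μ x) (μ y) ≤ K * dist x y := by
  have : Nonempty X := ⟨x⟩
  -- At a maximiser of `M`, pulling back along `T` halves the distance, which only `M ≤ 0` survives.
  let M : X × X → ℝ := fun q => dist (μ q.1) (μ q.2) - K * dist q.1 q.2
  obtain ⟨⟨a, b⟩, -, hmax⟩ := isCompact_univ.exists_isMaxOn univ_nonempty
    (by fun_prop : Continuous M).continuousOn
  have hle : ∀ x' y', dist (μ x') (μ y') - K * dist x' y' ≤ M (a, b) :=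
    fun x' y' => hmax (mem_univ (x', y'))
  suffices M (a, b) ≤ 0 by linarith [hle x y]
  obtain ⟨a', b', rfl, rfl, hab⟩ := hT a b
  have hM0 : 0 ≤ M (T a', T b') := by simpa using hle (T a') (T a')
  have hpre : dist (μ a') (μ b') ≤ M (T a', T b') + K * dist a' b' := by
    linarith [hle a' b']
  have hstep : dist (μ (T a')) (μ (T b')) ≤ dist (μ a') (μ b') + L * dist a' b' := by
    have hdiff : μ (T a') - μ (T b') = c * (μ a' - μ b') + (τ a' - τ b') := by
      linarith [hsol a', hsol b']
    calc dist (μ (T a')) (μ (T b')) ≤ |c| * dist (μ a') (μ b') + dist (τ a') (τ b') := by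
          simp only [Real.dist_eq, hdiff, ← abs_mul]
          exact abs_add_le _ _
      _ ≤ dist (μ a') (μ b') + L * dist a' b' :=
          add_le_add (mul_le_of_le_one_left dist_nonneg hc) (hτ.dist_le_mul a' b')
  have hK0 : 0 < K := lt_of_le_of_lt L.coe_nonneg hK
  have hshrink : K * dist (T a') (T b') ≤ (K + L) * dist a' b' := by
    simp only [M] at hM0 hpre; linarith
  have hd : dist (T a') (T b') = 0 := by
    nlinarith [mul_le_mul_of_nonneg_left hab hK0.le, dist_nonneg (x := a') (y := b'),
      dist_nonneg (x := T a') (y := T b')]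
  simp [M, dist_eq_zero.mp hd]

lemma lipschitzWith_of_comp_sub_mul_eq
    (hT : ∀ x y, ∃ x' y', T x' = x ∧ T y' = y ∧ 2 * dist x' y' ≤ dist x y)
    (hτ : LipschitzWith L τ) (hc : |c| ≤ 1) (hμ : Continuous μ)
    (hsol : ∀ x, μ (T x) - c * μ x = τ x) : LipschitzWith L μ := by
  refine LipschitzWith.of_dist_le_mul fun x y => ge_of_tendsto (x := 𝓝[>] (L : ℝ))
    ((continuous_id.mul continuous_const).tendsto' (L : ℝ) _ rfl |>.mono_left nhdsWithin_le_nhds)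
    (eventually_nhdsWithin_of_forall fun K hK =>
    dist_le_mul_of_comp_sub_mul_eq hT hτ hc hμ hsol hK x y)

end TwistedCohomologicalEquation

lemma abs_le_mul_diam_of_integral_eq_zero {X : Type*} [PseudoMetricSpace X] [CompactSpace X]
    [MeasurableSpace X] [OpensMeasurableSpace X] (ν : Measure X) [IsProbabilityMeasure ν]
    {f : X → ℝ} {L : NNReal} (hf : LipschitzWith L f) (h0 : ∫ y, f y ∂ν = 0) (x : X) :
    |f x| ≤ L * diam (univ : Set X) := by
  have hint : Integrable f ν :=
    hf.continuous.integrable_of_hasCompactSupport (HasCompactSupport.of_compactSpace f)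
  have hmean : f x = ∫ y, (f x - f y) ∂ν := by
    rw [integral_sub (integrable_const _) hint, h0]; simp
  rw [hmean, ← Real.norm_eq_abs]
  simpa using norm_integral_le_of_norm_le_const (μ := ν) (f := fun y => f x - f y)
    (ae_of_all _ fun y => by
    rw [← dist_eq_norm]
    exact (hf.dist_le_mul x y).trans (mul_le_mul_of_nonneg_left
      (dist_le_diam_of_mem isBounded_of_compactSpace (mem_univ x) (mem_univ y)) L.coe_nonneg))

lemma isCompact_setOf_comp_sub_mul_eq {X : Type*} [PseudoMetricSpace X] (T : X → X)
    (τ : X → ℝ) (L : NNReal) (C : ℝ) {s : Set ℝ} (hs : IsCompact s) :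
    IsCompact {q : ℝ × (X → ℝ) | q.1 ∈ s ∧ LipschitzWith L q.2 ∧ (∀ x, |q.2 x| ≤ C) ∧
      ∀ x, q.2 (T x) - q.1 * q.2 x = τ x} := by
  refine (hs.prod (isCompact_univ_pi fun _ => isCompact_Icc (a := -C) (b := C))).of_isClosed_subset
    ?_ fun q hq => ⟨hq.1, fun x _ => abs_le.mp (hq.2.2.1 x)⟩
  simp only [ofPred_and, ofPred_forall]
  exact (hs.isClosed.preimage continuous_fst).inter
    (((isClosed_setOfPred_lipschitzWith L).preimage continuous_snd).inter
    ((isClosed_iInter fun x => isClosed_le (by fun_prop) continuous_const).inter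
    (isClosed_iInter fun x => isClosed_eq (by fun_prop) continuous_const)))

namespace AddCircle

variable {p : ℝ}

lemma exists_coe_eq_abs_eq_norm (z : AddCircle p) : ∃ r : ℝ, (r : AddCircle p) = z ∧ |r| = ‖z‖ := by
  obtain ⟨t, rfl⟩ := QuotientAddGroup.mk_surjective z
  exact ⟨t - round (p⁻¹ * t) * p, by simp [coe_period], (norm_eq p).symm⟩

lemma exists_zsmul_eq_dist_le {n : ℕ} (hn : n ≠ 0) (x y : AddCircle p) :
    ∃ x' y' : AddCircle p, (n : ℤ) • x' = x ∧ (n : ℤ) • y' = y ∧ n * dist x' y' ≤ dist x y := by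
  obtain ⟨a, rfl⟩ := QuotientAddGroup.mk_surjective x
  obtain ⟨r, hr, hr_norm⟩ := exists_coe_eq_abs_eq_norm (y - (a : AddCircle p))
  have hn' : (n : ℝ) ≠ 0 := Nat.cast_ne_zero.mpr hn
  refine ⟨((a / n : ℝ) : AddCircle p), (((a + r) / n : ℝ) : AddCircle p), ?_, ?_, ?_⟩
  · rw [← coe_zsmul]; simp [mul_div_cancel₀ _ hn']
  · rw [← coe_zsmul]; simp [mul_div_cancel₀ _ hn', hr]
  · have hdist : dist ((a / n : ℝ) : AddCircle p) (((a + r) / n : ℝ) : AddCircle p) ≤ |r| / n := by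
      rw [dist_eq_norm, ← coe_sub]
      refine (QuotientAddGroup.norm_mk_le_norm (m := a / n - (a + r) / n)).trans_eq ?_
      rw [← sub_div, Real.norm_eq_abs, abs_div, Nat.abs_cast]; simp
    rw [hr_norm, ← dist_eq_norm, dist_comm y, le_div_iff₀' (by positivity)] at hdist
    exact hdist

end AddCircle

instance : IsProbabilityMeasure (volume : Measure UnitAddCircle) := ⟨UnitAddCircle.measure_univ⟩

lemma AddCircle.integral_comp_zsmul {p : ℝ} [Fact (0 < p)] {E : Type*} [NormedAddCommGroup E]
    [NormedSpace ℝ E] {n : ℤ} (hn : n ≠ 0) {f : AddCircle p → E}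
    (hf : AEStronglyMeasurable f volume) : ∫ θ, f (n • θ) = ∫ θ, f θ := by
  have hmp := Measure.measurePreserving_zsmul (volume : Measure (AddCircle p)) hn
  rw [← integral_map hmp.measurable.aemeasurable (by rwa [hmp.map_eq]), hmp.map_eq]

lemma UnitAddCircle.exists_integral_eq_zero_of_comp_sub_mul_eq {n : ℤ} (hn : n ≠ 0) {c : ℝ}
    {τ μ : UnitAddCircle → ℝ} (hτ : ∫ θ, τ θ = 0) (hμ : Continuous μ)
    (hsol : ∀ θ, μ (n • θ) - c * μ θ = τ θ) :
    ∃ ν : UnitAddCircle → ℝ, Continuous ν ∧ ∫ θ, ν θ = 0 ∧ ∀ θ, ν (n • θ) - c * ν θ = τ θ := by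
  have hint : Integrable μ := hμ.integrable_of_hasCompactSupport (.of_compactSpace μ)
  have hmean : (1 - c) * ∫ θ, μ θ = 0 := by
    simp_rw [← hsol] at hτ
    have hint' : Integrable fun θ => μ (n • θ) :=
      (hμ.comp (continuous_const_smul n)).integrable_of_hasCompactSupport (.of_compactSpace _)
    rw [integral_sub hint' (hint.const_mul c), integral_const_mul,
      AddCircle.integral_comp_zsmul hn hμ.aestronglyMeasurable] at hτ
    linarith
  refine ⟨fun θ => μ θ - ∫ φ, μ φ, hμ.sub continuous_const, ?_, fun θ => ?_⟩
  · rw [integral_sub hint (integrable_const _)]; simp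
  · linear_combination hsol θ - hmean

theorem stmt12 (ℓ : ℕ) (hℓ : 2 ≤ ℓ) (τ : UnitAddCircle → ℝ) (L : NNReal)
    (hτ : LipschitzWith L τ) (hint : ∫ θ : UnitAddCircle, τ θ = 0) :
    IsClosed {p : Set.Ioc (0:ℝ) 1 | ∃ μ : UnitAddCircle → ℝ, Continuous μ ∧
      ∀ θ, μ ((ℓ : ℤ) • θ) - (p : ℝ) * μ θ = τ θ} := by
  set G := {q : ℝ × (UnitAddCircle → ℝ) | q.1 ∈ Icc 0 1 ∧ LipschitzWith L q.2 ∧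
    (∀ θ, |q.2 θ| ≤ L * diam (univ : Set UnitAddCircle)) ∧
    ∀ θ, q.2 ((ℓ : ℤ) • θ) - q.1 * q.2 θ = τ θ}
  have hG : IsCompact G := isCompact_setOf_comp_sub_mul_eq _ τ L _ isCompact_Icc
  have hT : ∀ x y : UnitAddCircle, ∃ x' y', (ℓ : ℤ) • x' = x ∧ (ℓ : ℤ) • y' = y ∧
      2 * dist x' y' ≤ dist x y := fun x y => by
    obtain ⟨x', y', hx, hy, hd⟩ := AddCircle.exists_zsmul_eq_dist_le (n := ℓ) (by omega) x y
    exact ⟨x', y', hx, hy, le_trans (by gcongr; exact_mod_cast hℓ) hd⟩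
  suffices {p : Ioc (0:ℝ) 1 | ∃ μ : UnitAddCircle → ℝ, Continuous μ ∧
      ∀ θ, μ ((ℓ : ℤ) • θ) - (p : ℝ) * μ θ = τ θ} = Subtype.val ⁻¹' (Prod.fst '' G) by
    rw [this]; exact (hG.image continuous_fst).isClosed.preimage continuous_subtype_val
  ext ⟨c, hc⟩
  constructor
  · rintro ⟨μ, hμ, hsol⟩
    obtain ⟨ν, hν, hν0, hνsol⟩ :=
      UnitAddCircle.exists_integral_eq_zero_of_comp_sub_mul_eq (by positivity) hint hμ hsol
    have hlip := lipschitzWith_of_comp_sub_mul_eq hT hτ (abs_le.mpr ⟨by linarith [hc.1], hc.2⟩)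
      hν hνsol
    exact ⟨(c, ν), ⟨Ioc_subset_Icc_self hc, hlip,
      abs_le_mul_diam_of_integral_eq_zero volume hlip hν0, hνsol⟩, rfl⟩
  · rintro ⟨⟨c, μ⟩, ⟨-, hlip, -, hsol⟩, rfl⟩
    exact ⟨μ, hlip.continuous, hsol⟩
end

section
/- Let ℓ ≥ 2 and let τ : ℝ/ℤ → ℝ be a non-constant Lipschitz function with ∫τ = 0. Suppose for every n ≥ 1 there exist λₙ ∈ (0, λ₀] with λ₀ < 1 and Lipschitz functions μₙ with ∫μₙ = 0, μ₀ = τ, and μₙ(ℓθ) - λₙμₙ(θ) = μ_{n-1}(θ) for all θ and n. Then for every k ∈ ℤ with ℓ ∤ k and every j ≥ 0, the Fourier coefficient τ̂(ℓʲk) = 0; hence τ is constant, a contradiction. In particular no such infinite sequence exists. -/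
/-!
Dilation by `ℓ` multiplies Lipschitz constants by `ℓ`, so a Lipschitz solution of
`μ(ℓθ) - λμ(θ) = ν(θ)` has Lipschitz constant at most `Lip(ν) / (ℓ - λ) ≤ Lip(ν)`. Hence every `μₙ`
is `Lip(τ)`-Lipschitz, and the nonzero Fourier coefficients of the `μₙ` are bounded uniformly
in `n`. In Fourier coefficients the recursion reads `μ̂ₙ₊₁(q/ℓ) - λₙ₊₁ μ̂ₙ₊₁(q) = μ̂ₙ(q)`, the
first term being absent when `ℓ ∤ q`; by induction on `|q|` it always vanishes, so
`μ̂₀(q) = (-1)ⁿ λ₁ ⋯ λₙ μ̂ₙ(q) → 0` for `q ≠ 0`, and `τ` is constant.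
-/

open MeasureTheory AddCircle
open scoped NNReal

namespace AddCircle

variable {T : ℝ}

theorem exists_nsmul_eq_dist_le {m : ℕ} (hm : m ≠ 0) (x v : AddCircle T) :
    ∃ y, m • y = v ∧ dist x y ≤ dist (m • x) v / m := by
  obtain ⟨a, ha⟩ := QuotientAddGroup.mk_surjective (v - m • x)
  set r := a - round (T⁻¹ * a) * T
  have hr : (r : AddCircle T) = v - m • x := by
    rw [← ha, coe_sub, sub_eq_self, ← zsmul_eq_mul, coe_zsmul, coe_period, smul_zero]
  have hrnorm : |r| = dist (m • x) v := by
    rw [dist_comm, dist_eq_norm, ← ha, norm_eq]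
  refine ⟨x + ((r / m : ℝ) : AddCircle T), ?_, ?_⟩
  · rw [smul_add, ← coe_nsmul, nsmul_eq_mul, mul_div_cancel₀ _ (Nat.cast_ne_zero.mpr hm), hr,
      add_sub_cancel]
  · rw [dist_eq_norm, sub_add_cancel_left, norm_neg, ← hrnorm]
    calc ‖((r / m : ℝ) : AddCircle T)‖ ≤ |r / m| := QuotientAddGroup.norm_mk_le_norm
      _ = |r| / m := by rw [abs_div, Nat.abs_cast]

variable {E : Type*} [SeminormedAddCommGroup E] [NormedSpace ℝ E] {m : ℕ} {c : ℝ}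
  {g h : AddCircle T → E} {L K : ℝ≥0}

theorem lipschitzWith_div_of_nsmul_sub_smul_eq (hm : m ≠ 0) (hg : LipschitzWith L g)
    (hh : LipschitzWith K h) (heq : ∀ x, h (m • x) - c • h x = g x) :
    LipschitzWith ((L + ‖c‖₊ * K) / m) h := by
  refine LipschitzWith.of_dist_le_mul fun u v ↦ ?_
  obtain ⟨x, rfl, -⟩ := exists_nsmul_eq_dist_le hm 0 u
  obtain ⟨y, rfl, hxy⟩ := exists_nsmul_eq_dist_le hm x v
  have hsplit : ∀ z, h (m • z) = g z + c • h z := fun z ↦ by rw [← heq, sub_add_cancel]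
  calc dist (h (m • x)) (h (m • y)) = dist (g x + c • h x) (g y + c • h y) := by
        rw [hsplit, hsplit]
    _ ≤ dist (g x) (g y) + ‖c‖ * dist (h x) (h y) := by
        rw [← dist_smul₀]; exact dist_add_add_le _ _ _ _
    _ ≤ L * dist x y + ‖c‖ * (K * dist x y) := by
        gcongr
        exacts [hg.dist_le_mul x y, hh.dist_le_mul x y]
    _ = (L + ‖c‖ * K) * dist x y := by ring
    _ ≤ (L + ‖c‖ * K) * (dist (m • x) (m • y) / m) := by gcongr
    _ = ↑((L + ‖c‖₊ * K) / m) * dist (m • x) (m • y) := by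
        push_cast
        ring

theorem lipschitzWith_of_nsmul_sub_smul_eq {L' : ℝ≥0} (hcm : ‖c‖₊ < m)
    (hL' : L + ‖c‖₊ * L' ≤ m * L') (hg : LipschitzWith L g) (hh : LipschitzWith K h)
    (heq : ∀ x, h (m • x) - c • h x = g x) : LipschitzWith L' h := by
  have hm : (0 : ℝ≥0) < m := pos_of_gt hcm
  have hm0 : m ≠ 0 := Nat.cast_ne_zero.mp hm.ne'
  set ρ := ‖c‖₊ / m
  have hρ : ρ < 1 := (div_lt_one hm).mpr hcm
  -- Iterating the previous lemma, the constants `L' + ρ ^ j * K` decrease to `L'`.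
  have hj : ∀ j, LipschitzWith (L' + ρ ^ j * K) h := by
    intro j
    induction j with
    | zero => exact hh.weaken (by simp)
    | succ j ih =>
      refine (lipschitzWith_div_of_nsmul_sub_smul_eq hm0 hg ih heq).weaken ?_
      rw [div_le_iff₀ hm, ← NNReal.coe_le_coe]
      have hρm : (ρ : ℝ) * m = ‖c‖ := by
        simp only [ρ, NNReal.coe_div, coe_nnnorm, NNReal.coe_natCast]
        exact div_mul_cancel₀ _ (Nat.cast_ne_zero.mpr hm0)
      have := NNReal.coe_le_coe.mpr hL'
      push_cast at this ⊢
      linear_combination this - (ρ : ℝ) ^ j * K * hρm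
  refine LipschitzWith.of_dist_le_mul fun x y ↦ ?_
  have hρj := tendsto_pow_atTop_nhds_zero_of_lt_one ρ.coe_nonneg (NNReal.coe_lt_one.mpr hρ)
  have hlim := ((hρj.mul_const (K : ℝ)).const_add (L' : ℝ)).mul_const (dist x y)
  rw [zero_mul, add_zero] at hlim
  exact ge_of_tendsto' hlim fun j ↦ by exact_mod_cast (hj j).dist_le_mul x y

theorem lipschitzWith_of_forall_nsmul_sub_smul_eq {f : ℕ → AddCircle T → E} {c : ℕ → ℝ}
    (hcm : ∀ n, ‖c n‖₊ + 1 ≤ m) (h0 : LipschitzWith L (f 0))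
    (hf : ∀ n, ∃ K, LipschitzWith K (f n))
    (heq : ∀ n x, f (n + 1) (m • x) - c n • f (n + 1) x = f n x) (n : ℕ) :
    LipschitzWith L (f n) := by
  induction n with
  | zero => exact h0
  | succ n ih =>
    obtain ⟨K, hK⟩ := hf (n + 1)
    refine lipschitzWith_of_nsmul_sub_smul_eq ((lt_add_one _).trans_le (hcm n)) ?_ ih hK (heq n)
    calc L + ‖c n‖₊ * L = (‖c n‖₊ + 1) * L := by ring
      _ ≤ m * L := by gcongr; exact hcm n

end AddCircle

theorem eq_zero_of_forall_eq_smul_succ {𝕜 E : Type*} [NormedField 𝕜] [NormedAddCommGroup E]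
    [NormedSpace 𝕜 E] {a : ℕ → E} {c : ℕ → 𝕜} {C r : ℝ} (ha : ∀ n, ‖a n‖ ≤ C)
    (hc : ∀ n, ‖c n‖ ≤ r) (hr : r < 1) (h : ∀ n, a n = c n • a (n + 1)) (n : ℕ) : a n = 0 := by
  have hr0 : 0 ≤ r := (norm_nonneg _).trans (hc 0)
  have hbound : ∀ j n, ‖a n‖ ≤ r ^ j * C := by
    intro j
    induction j with
    | zero => simpa using ha
    | succ j ih =>
      intro n
      calc ‖a n‖ = ‖c n‖ * ‖a (n + 1)‖ := by rw [h n, norm_smul]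
        _ ≤ r * (r ^ j * C) := mul_le_mul (hc n) (ih (n + 1)) (norm_nonneg _) hr0
        _ = r ^ (j + 1) * C := by ring
  have hlim : Filter.Tendsto (fun j ↦ r ^ j * C) Filter.atTop (nhds 0) := by
    simpa using (tendsto_pow_atTop_nhds_zero_of_lt_one hr0 hr).mul_const C
  exact norm_le_zero_iff.mp (ge_of_tendsto' hlim fun j ↦ hbound j n)

section Fourier

variable {T : ℝ}

theorem fourier_apply_add (n : ℤ) (x y : AddCircle T) :
    fourier n (x + y) = fourier n x * fourier n y := by
  rw [fourier_apply, fourier_apply, fourier_apply, zsmul_add, toCircle_add, Circle.coe_mul]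

variable [hT : Fact (0 < T)] {E : Type*} [NormedAddCommGroup E] [NormedSpace ℂ E]

theorem fourierCoeff_comp_zsmul_mul {f : AddCircle T → E}
    (hf : AEStronglyMeasurable f haarAddCircle) {m : ℤ} (hm : m ≠ 0) (n : ℤ) :
    fourierCoeff (fun x ↦ f (m • x)) (m * n) = fourierCoeff f n := by
  have hmp := Measure.measurePreserving_zsmul (haarAddCircle (T := T)) hm
  have hfourier : ∀ x : AddCircle T, fourier (-(m * n)) x = fourier (-n) (m • x) := by
    intro x; rw [fourier_apply, fourier_apply, smul_smul, neg_mul, mul_comm]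
  simp only [fourierCoeff, hfourier]
  rw [← integral_map (f := fun x ↦ fourier (-n) x • f x) hmp.measurable.aemeasurable
    (by rw [hmp.map_eq]; exact (map_continuous _).aestronglyMeasurable.smul hf), hmp.map_eq]

theorem fourierCoeff_eq_zero_of_add_eq {f : AddCircle T → E} {c : AddCircle T} {n : ℤ}
    (hc : fourier n c ≠ 1) (hf : ∀ x, f (x + c) = f x) : fourierCoeff f n = 0 := by
  have hcoeff : fourierCoeff f n = fourier (-n) c • fourierCoeff f n := by
    calc fourierCoeff f n = ∫ x, fourier (-n) (x + c) • f (x + c) ∂haarAddCircle :=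
          (integral_add_right_eq_self (fun x ↦ fourier (-n) x • f x) c).symm
      _ = fourier (-n) c • fourierCoeff f n := by
          simp only [fourierCoeff, hf, fourier_apply_add, mul_comm _ (fourier (-n) c), mul_smul,
            integral_smul]
  have hc' : fourier (-n) c - 1 ≠ 0 := by
    rw [sub_ne_zero, fourier_neg]
    exact fun h ↦ hc (by simpa using congrArg (starRingEnd ℂ) h)
  exact (smul_eq_zero.mp (by rw [sub_smul, one_smul, ← hcoeff, sub_self])).resolve_left hc'

theorem fourierCoeff_comp_zsmul_of_not_dvd (f : AddCircle T → E) {m n : ℤ} (hm : m ≠ 0)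
    (hmn : ¬ m ∣ n) : fourierCoeff (fun x ↦ f (m • x)) n = 0 := by
  refine fourierCoeff_eq_zero_of_add_eq (c := ((T / m : ℝ) : AddCircle T)) ?_ fun x ↦ ?_
  · rw [fourier_coe_apply, Ne, Complex.exp_eq_one_iff]
    rintro ⟨k, hk⟩
    have hT0 : (T : ℂ) ≠ 0 := Complex.ofReal_ne_zero.mpr hT.out.ne'
    push_cast at hk
    field_simp at hk
    exact hmn ⟨k, by exact_mod_cast hk⟩
  · rw [smul_add, ← coe_zsmul, zsmul_eq_mul, mul_div_cancel₀ _ (Int.cast_ne_zero.mpr hm),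
      coe_period, add_zero]

theorem fourierCoeff_const [CompleteSpace E] {n : ℤ} (hn : n ≠ 0) (c : E) :
    fourierCoeff (fun _ : AddCircle T ↦ c) n = 0 := by
  have h := congrFun (fourierCoeff_fourier (T := T) 0) n
  simp only [fourierCoeff, fourier_zero, smul_eq_mul, mul_one, Pi.single_apply, hn, if_false] at h
  rw [fourierCoeff, integral_smul_const, h, zero_smul]

theorem norm_fourierCoeff_le_of_lipschitzWith [CompleteSpace E] {f : AddCircle T → E} {K : ℝ≥0}
    (hf : LipschitzWith K f) {n : ℤ} (hn : n ≠ 0) : ‖fourierCoeff f n‖ ≤ K * (T / 2) := by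
  have hint : Integrable f haarAddCircle :=
    hf.continuous.integrable_of_hasCompactSupport (.of_compactSpace f)
  have hsub : fourierCoeff f n = ∫ x, fourier (-n) x • (f x - f 0) ∂haarAddCircle := by
    simp only [smul_sub]
    rw [integral_sub (hint.fourier_smul _) ((integrable_const (f 0)).fourier_smul _)]
    exact (sub_eq_self.mpr (fourierCoeff_const hn (f 0))).symm
  rw [hsub]
  refine (norm_integral_le_of_norm_le_const (C := K * (T / 2)) (.of_forall fun x ↦ ?_)).trans_eq
    (by simp)
  rw [norm_smul, fourier_apply, Circle.norm_coe, one_mul, ← dist_eq_norm]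
  calc dist (f x) (f 0) ≤ K * dist x 0 := hf.dist_le_mul x 0
    _ ≤ K * (T / 2) := by
      gcongr
      simpa [abs_of_pos hT.out] using norm_le_half_period T hT.out.ne' (x := x)

theorem fourierCoeff_comp_zsmul_of_sub_smul_eq {g h : AddCircle T → E} {c : ℂ} {m : ℤ}
    (hg : Integrable g haarAddCircle) (hh : Integrable h haarAddCircle)
    (heq : ∀ x, h (m • x) - c • h x = g x) (n : ℤ) :
    fourierCoeff (fun x ↦ h (m • x)) n = fourierCoeff g n + c • fourierCoeff h n := by
  have hfun : (fun x ↦ h (m • x)) = g + c • h := funext fun x ↦ by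
    simp [← heq x]
  rw [hfun, fourierCoeff.add hg (hh.smul c), Pi.add_apply, fourierCoeff.const_smul]

theorem fourierCoeff_eq_zero_of_comp_zsmul_sub_smul_eq {F : ℕ → AddCircle T → E} {c : ℕ → ℂ}
    {m : ℤ} {r : ℝ} (hm : 1 < |m|) (hF : ∀ n, Integrable (F n) haarAddCircle)
    (hbdd : ∀ q ≠ 0, ∃ C, ∀ n, ‖fourierCoeff (F n) q‖ ≤ C) (hc : ∀ n, ‖c n‖ ≤ r) (hr : r < 1)
    (heq : ∀ n x, F (n + 1) (m • x) - c n • F (n + 1) x = F n x) {q : ℤ} (hq : q ≠ 0) (n : ℕ) :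
    fourierCoeff (F n) q = 0 := by
  have hm0 : m ≠ 0 := abs_pos.mp (zero_lt_one.trans hm)
  induction hk : q.natAbs using Nat.strong_induction_on generalizing q n with
  | _ k ih =>
  have hcomp : ∀ n, fourierCoeff (fun x ↦ F n (m • x)) q = 0 := by
    intro n
    by_cases hdvd : m ∣ q
    · obtain ⟨q', rfl⟩ := hdvd
      have hq' : q' ≠ 0 := right_ne_zero_of_mul hq
      rw [fourierCoeff_comp_zsmul_mul (hF n).aestronglyMeasurable hm0]
      refine ih _ ?_ hq' n rfl
      rw [← hk, Int.natAbs_mul]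
      rw [Int.abs_eq_natAbs] at hm
      exact lt_mul_of_one_lt_left (Int.natAbs_pos.mpr hq') (by omega)
    · exact fourierCoeff_comp_zsmul_of_not_dvd _ hm0 hdvd
  obtain ⟨C, hC⟩ := hbdd q hq
  refine eq_zero_of_forall_eq_smul_succ hC (c := fun n ↦ -c n) (by simpa using hc) hr
    (fun n ↦ ?_) n
  have hrec := fourierCoeff_comp_zsmul_of_sub_smul_eq (hF n) (hF (n + 1)) (heq n) q
  rw [hcomp, eq_comm, add_eq_zero_iff_eq_neg] at hrec
  rw [hrec, neg_smul]

theorem eq_fourierCoeff_zero_of_fourierCoeff_eq_zero {f : AddCircle T → ℂ} (hf : Continuous f)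
    (h : ∀ n ≠ 0, fourierCoeff f n = 0) (x : AddCircle T) : f x = fourierCoeff f 0 := by
  have hsingle : fourierCoeff f = Pi.single 0 (fourierCoeff f 0) := by
    ext n
    rcases eq_or_ne n 0 with rfl | hn
    · simp
    · simp [h n hn, hn]
  have hsum := has_pointwise_sum_fourier_series_of_summable (f := ⟨f, hf⟩)
    (hsingle ▸ (hasSum_pi_single 0 _).summable) x
  have hsum₀ := hasSum_single (f := fun i ↦ fourierCoeff f i • fourier i x) 0
    fun n hn ↦ by simp [h n hn]
  simpa using hsum.unique hsum₀

end Fourier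

theorem stmt19_general (ℓ : ℕ) (hℓ : 2 ≤ ℓ) (τ : UnitAddCircle → ℝ)
    (hτlip : ∃ L : NNReal, LipschitzWith L τ) (hnc : ∃ x y, τ x ≠ τ y)
    (Λ : ℝ) (hΛ : Λ < 1)
    (lam : ℕ → ℝ) (μ : ℕ → UnitAddCircle → ℝ)
    (hlam : ∀ n : ℕ, lam (n + 1) ∈ Set.Ioc (0:ℝ) Λ)
    (hμ0 : μ 0 = τ)
    (hμlip : ∀ n : ℕ, ∃ L : NNReal, LipschitzWith L (μ n))
    (hrec : ∀ (n : ℕ) (θ : UnitAddCircle),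
      μ (n + 1) ((ℓ : ℤ) • θ) - lam (n + 1) * μ (n + 1) θ = μ n θ) :
    False := by
  obtain ⟨L, hL⟩ := hτlip
  have hlam_norm : ∀ n, ‖lam (n + 1)‖ ≤ Λ := fun n ↦ by
    rw [Real.norm_of_nonneg (hlam n).1.le]; exact (hlam n).2
  have hℓ' : (2 : ℝ) ≤ ℓ := by exact_mod_cast hℓ
  have hlam_le : ∀ n, ‖lam (n + 1)‖₊ + 1 ≤ ℓ := fun n ↦ by
    rw [← NNReal.coe_le_coe]
    push_cast
    linarith [hlam_norm n]
  have hLip : ∀ n, LipschitzWith L (μ n) :=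
    lipschitzWith_of_forall_nsmul_sub_smul_eq hlam_le (hμ0 ▸ hL) hμlip
      fun n θ ↦ by simpa only [natCast_zsmul, smul_eq_mul] using hrec n θ
  set F : ℕ → UnitAddCircle → ℂ := fun n θ ↦ μ n θ
  have hFLip : ∀ n, LipschitzWith L (F n) := fun n ↦ by
    simpa [F, Function.comp_def] using Complex.isometry_ofReal.lipschitz.comp (hLip n)
  have hcoeff : ∀ q ≠ 0, fourierCoeff (F 0) q = 0 := fun q hq ↦
    fourierCoeff_eq_zero_of_comp_zsmul_sub_smul_eq (m := ℓ) (c := fun n ↦ (lam (n + 1) : ℂ))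
      (by simp; omega)
      (fun n ↦ (hFLip n).continuous.integrable_of_hasCompactSupport (.of_compactSpace _))
      (fun q hq ↦ ⟨_, fun n ↦ norm_fourierCoeff_le_of_lipschitzWith (hFLip n) hq⟩)
      (fun n ↦ by simpa using hlam_norm n) hΛ
      (fun n θ ↦ by simp only [F, smul_eq_mul]; exact_mod_cast hrec n θ) hq 0
  obtain ⟨x, y, hxy⟩ := hnc
  have hconst := eq_fourierCoeff_zero_of_fourierCoeff_eq_zero (hFLip 0).continuous hcoeff
  rw [← hμ0] at hxy
  exact hxy (Complex.ofReal_injective ((hconst x).trans (hconst y).symm))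

theorem stmt19 (ℓ : ℕ) (hℓ : 2 ≤ ℓ) (τ : UnitAddCircle → ℝ)
    (hτlip : ∃ L : NNReal, LipschitzWith L τ) (hnc : ∃ x y, τ x ≠ τ y)
    (hint : ∫ θ : UnitAddCircle, τ θ = 0)
    (Λ : ℝ) (hΛ : Λ < 1)
    (lam : ℕ → ℝ) (μ : ℕ → UnitAddCircle → ℝ)
    (hlam : ∀ n : ℕ, lam (n + 1) ∈ Set.Ioc (0:ℝ) Λ)
    (hμ0 : μ 0 = τ)
    (hμlip : ∀ n : ℕ, ∃ L : NNReal, LipschitzWith L (μ n))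
    (hμint : ∀ n : ℕ, ∫ θ : UnitAddCircle, μ n θ = 0)
    (hrec : ∀ (n : ℕ) (θ : UnitAddCircle),
      μ (n + 1) ((ℓ : ℤ) • θ) - lam (n + 1) * μ (n + 1) θ = μ n θ) :
    False :=
  stmt19_general ℓ hℓ τ hτlip hnc Λ hΛ lam μ hlam hμ0 hμlip hrec
end
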